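/- Every iPCF term parallel-reduces to its complete development: M ⟹ M*. -/

import Mathlib

/-- Types of iPCF. -/
inductive Ty : Type where
  | nat | bool
  | arrow : Ty → Ty → Ty
  | box : Ty → Ty
deriving DecidableEq

/-- Terms of iPCF (named variables).  `iop` is a constant `f̃` representing a
fixed intensional operation on closed terms. -/
inductive Tm : Type where
  | var : String → Tm
  | lam : String → Ty → Tm → Tm
  | app : Tm → Tm → Tm
  | box : Tm → Tm
  | letbox : String → Tm → Tm → Tm
  | fix : String → Tm → Tm
  | lit : Nat → Tm
  | tt | ff
  | succ | pred | iszero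
  | cond : Ty → Tm
  | iop : Tm
deriving DecidableEq

/-- Substitution `M[P/x]`. -/
def subst (x : String) (P : Tm) : Tm → Tm
  | .var y => if y = x then P else .var y
  | .lam y A M => if y = x then .lam y A M else .lam y A (subst x P M)
  | .app M N => .app (subst x P M) (subst x P N)
  | .box M => .box (subst x P M)
  | .letbox u M N => .letbox u (subst x P M) (if u = x then N else subst x P N)
  | .fix z M => if z = x then .fix z M else .fix z (subst x P M)
  | M => M

/-- Free variables. -/
def fv : Tm → Finset String
  | .var x => {x}
  | .lam y _ M => fv M \ {y}
  | .app M N => fv M ∪ fv N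
  | .box M => fv M
  | .letbox u M N => fv M ∪ (fv N \ {u})
  | .fix z M => fv M \ {z}
  | _ => ∅

/-- Unboxed free variables: those not under a `box` or `fix`. -/
def ufv : Tm → Finset String
  | .var x => {x}
  | .lam y _ M => ufv M \ {y}
  | .app M N => ufv M ∪ ufv N
  | .box _ => ∅
  | .letbox u M N => ufv M ∪ (ufv N \ {u})
  | .fix _ _ => ∅
  | _ => ∅

/-- Boxed free variables: those occurring under a `box` or `fix`. -/
def bfv : Tm → Finset String
  | .var _ => ∅
  | .lam y _ M => bfv M \ {y}
  | .app M N => bfv M ∪ bfv N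
  | .box M => fv M
  | .letbox u M N => bfv M ∪ (bfv N \ {u})
  | .fix z M => fv M \ {z}
  | _ => ∅

/-- Contexts, written with the most recently added variable at the head;
so the paper's `Γ, x:A, Γ'` is rendered `Γ' ++ (x, A) :: Γ`. -/
abbrev Cx := List (String × Ty)

/-- The variables declared in a context. -/
def varsOf (Γ : Cx) : Finset String := (Γ.map Prod.fst).toFinset

/-- Dual-context typing judgment `Δ; Γ ⊢ M : A` of iPCF. -/
inductive Types : Cx → Cx → Tm → Ty → Prop where
  | var {Δ Γ x A} : (x, A) ∈ Γ → Types Δ Γ (.var x) A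
  | mvar {Δ Γ u A} : (u, A) ∈ Δ → Types Δ Γ (.var u) A
  | lam {Δ Γ x A M B} : Types Δ ((x, A) :: Γ) M B → Types Δ Γ (.lam x A M) (.arrow A B)
  | app {Δ Γ M N A B} : Types Δ Γ M (.arrow A B) → Types Δ Γ N A → Types Δ Γ (.app M N) B
  | box {Δ Γ M A} : Types Δ [] M A → Types Δ Γ (.box M) (.box A)
  | letbox {Δ Γ u M N A C} : Types Δ Γ M (.box A) → Types ((u, A) :: Δ) Γ N C →
      Types Δ Γ (.letbox u M N) C
  | fix {Δ Γ z M A} : Types Δ [(z, .box A)] M A → Types Δ Γ (.fix z M) (.box A)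
  | lit {Δ Γ n} : Types Δ Γ (.lit n) .nat
  | tt {Δ Γ} : Types Δ Γ .tt .bool
  | ff {Δ Γ} : Types Δ Γ .ff .bool
  | succ {Δ Γ} : Types Δ Γ .succ (.arrow .nat .nat)
  | pred {Δ Γ} : Types Δ Γ .pred (.arrow .nat .nat)
  | iszero {Δ Γ} : Types Δ Γ .iszero (.arrow .nat .bool)
  | cond {Δ Γ G} : Types Δ Γ (.cond G) (.arrow .bool (.arrow G (.arrow G G)))

/-- One-step β-reduction of iPCF, parametrised by the intensional
operation `f` on (closed) terms.  There is no congruence rule under `box`. -/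
inductive Red (f : Tm → Tm) : Tm → Tm → Prop where
  | beta {x A M N} : Red f (.app (.lam x A M) N) (subst x N M)
  | boxbeta {u M N} : Red f (.letbox u (.box M) N) (subst u M N)
  | fix {z M} : Red f (.fix z M) (.box (subst z (.fix z M) M))
  | iop {M} : fv M = ∅ → Red f (.app .iop (.box M)) (.box (f M))
  | zeroTrue : Red f (.app .iszero (.lit 0)) .tt
  | zeroFalse {n} : Red f (.app .iszero (.lit (n + 1))) .ff
  | succ {n} : Red f (.app .succ (.lit n)) (.lit (n + 1))
  | pred {n} : Red f (.app .pred (.lit n)) (.lit (n - 1))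
  | condTrue {G M N} : Red f (.app (.app (.app (.cond G) .tt) M) N) M
  | condFalse {G M N} : Red f (.app (.app (.app (.cond G) .ff) M) N) N
  | congLam {x A M N} : Red f M N → Red f (.lam x A M) (.lam x A N)
  | app1 {M N P} : Red f M N → Red f (.app M P) (.app N P)
  | app2 {M P Q} : Red f P Q → Red f (.app M P) (.app M Q)
  | let1 {u M N P} : Red f M N → Red f (.letbox u M P) (.letbox u N P)
  | let2 {u M P Q} : Red f P Q → Red f (.letbox u M P) (.letbox u M Q)

/-- Parallel reduction `⟹` of iPCF (Tait–Martin-Löf style), parametrised by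
the intensional operation `f`.  No congruence under `box`. -/
inductive Par (f : Tm → Tm) : Tm → Tm → Prop where
  | refl {M} : Par f M M
  | congLam {x A M N} : Par f M N → Par f (.lam x A M) (.lam x A N)
  | app {M N P Q} : Par f M N → Par f P Q → Par f (.app M P) (.app N Q)
  | beta {x A M N P Q} : Par f M N → Par f P Q →
      Par f (.app (.lam x A M) P) (subst x Q N)
  | letbox {u M N P Q} : Par f M N → Par f P Q →
      Par f (.letbox u M P) (.letbox u N Q)
  | boxbeta {u M N P} : Par f M N → Par f (.letbox u (.box P) M) (subst u P N)
  | fix {z M} : Par f (.fix z M) (.box (subst z (.fix z M) M))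
  | iop {M} : fv M = ∅ → Par f (.app .iop (.box M)) (.box (f M))
  | condTrue {G M M' N} : Par f M M' →
      Par f (.app (.app (.app (.cond G) .tt) M) N) M'
  | condFalse {G M N N'} : Par f N N' →
      Par f (.app (.app (.app (.cond G) .ff) M) N) N'

/-- The complete development `M*`. -/
def cd (f : Tm → Tm) : Tm → Tm
  | .var x => .var x
  | .lam x A M => .lam x A (cd f M)
  | .app .iop (.box M) => if fv M = ∅ then .box (f M) else .app .iop (.box M)
  | .app (.lam x _ M) N => subst x (cd f N) (cd f M)
  | .app (.app (.app (.cond _) .tt) M) _ => cd f M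
  | .app (.app (.app (.cond _) .ff) _) N => cd f N
  | .app M N => .app (cd f M) (cd f N)
  | .box M => .box M
  | .letbox u (.box M) N => subst u M (cd f N)
  | .letbox u M N => .letbox u (cd f M) (cd f N)
  | .fix z M => .box (subst z (.fix z M) M)
  | M => M

/-- every term parallel-reduces to its complete development:
`M ⟹ M*`. -/
theorem par_complete_development (f : Tm → Tm) (M : Tm) : Par f M (cd f M) := by
  -- The cases are the clauses of `cd` in order, its `iop` clause split by the `if` into cases 3 and 4.
  induction M using cd.induct with
  | case1 => exact .refl
  | case2 _ _ _ ih => exact .congLam ih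
  | case3 M hM => rw [cd.eq_3, if_pos hM]; exact .iop hM
  | case4 M hM => rw [cd.eq_3, if_neg hM]; exact .refl
  | case5 _ _ _ _ ihN ihM => exact .beta ihM ihN
  | case6 _ _ _ ih => exact .condTrue ih
  | case7 _ _ _ ih => exact .condFalse ih
  | case8 M N h₁ h₂ h₃ h₄ ihM ihN => rw [cd.eq_7 f M N h₁ h₂ h₃ h₄]; exact .app ihM ihN
  | case9 => exact .refl
  | case10 _ _ _ ih => exact .boxbeta ih
  | case11 u M N hM ihM ihN => rw [cd.eq_10 f u M N hM]; exact .letbox ihM ihN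
  | case12 => exact .fix
  | case13 M => rw [cd.eq_12 f M ‹_› ‹_› ‹_› ‹_› ‹_› ‹_› ‹_› ‹_› ‹_› ‹_› ‹_›]; exact .refl
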